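/- The function g has a unique minimizer (c₁*, c₂*) on D. Moreover: if a* = 0 then c₁* = 0; and if a* > 0, then c₁* = 0 if and only if β ≥ β_max. -/

import Mathlib

/-!
Let `m = g(c₁, c₂)` at a minimizer and tilt `H` to `φ x = H x - m x`. Minimality says exactly
that `c₂` minimizes `φ` on `(c₁ + β, ∞)` and `c₁` maximizes `φ` on `[0, c₂ - β)`, with
`φ c₂ = φ c₁ - m β`. Hence `H' c₂ = m`, and either `c₁ = 0` with `H' 0 ≤ m`, or `H' c₁ = m`.
As `φ` drops from `c₁` to `c₂`, `H' ≤ m` somewhere on `(c₁, c₂)`, which forces `a* < c₂` and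
`c₁ < a*`; on each monotone branch `H'` is injective, so `m` pins down the minimizer.
Existence is by compactness: `g` exceeds any fixed level near the diagonal `c₂ = c₁ + β` and,
because `H' → ∞`, for large `c₂`.

For the threshold: `g(0, z) < H' 0` as soon as `z - (H z - H 0) / H' 0 > β`, so `c₁ = 0` forces
`β_max ≤ β`. Conversely an interior `c₁` has `m < H' 0`, but `H c₁ ≤ H 0 + H' 0 c₁` (as
`H' ≤ H' 0` on `[0, a*]`) and `H c₂ ≥ H z₀ + H' 0 (c₂ - z₀)` (the tangent at `z₀`, where
`H' z₀ = H' 0`) give `m ≥ H' 0` whenever `β ≥ β_max`.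
-/

open Set Filter Topology

section Extension

variable {α β : Type*} [LinearOrder α] [TopologicalSpace α] [OrderTopology α] [DenselyOrdered α]
  [LinearOrder β] [TopologicalSpace β] [OrderClosedTopology β] {f : α → β} {a b : α}

theorem StrictMonoOn.Icc_of_Ioo (hf : StrictMonoOn f (Ioo a b)) (hc : ContinuousOn f (Icc a b)) :
    StrictMonoOn f (Icc a b) := by
  intro x hx y hy hxy
  obtain ⟨t, hxt, hty⟩ := exists_between hxy
  obtain ⟨t', htt', ht'y⟩ := exists_between hty
  have hsub : Ioo x y ⊆ Ioo a b := Ioo_subset_Ioo hx.1 hy.2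
  have ht : t ∈ Ioo a b := hsub ⟨hxt, hty⟩
  have ht' : t' ∈ Ioo a b := hsub ⟨hxt.trans htt', ht'y⟩
  have hxt_le : f x ≤ f t :=
    ContinuousWithinAt.closure_le (by rw [closure_Ioo hxt.ne]; exact left_mem_Icc.2 hxt.le)
      ((hc x hx).mono fun s (hs : s ∈ Ioo x t) => Ioo_subset_Icc_self (hsub ⟨hs.1, hs.2.trans hty⟩))
      continuousWithinAt_const fun s hs => (hf (hsub ⟨hs.1, hs.2.trans hty⟩) ht hs.2).le
  have ht'y_le : f t' ≤ f y :=
    ContinuousWithinAt.closure_le (by rw [closure_Ioo ht'y.ne]; exact right_mem_Icc.2 ht'y.le)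
      continuousWithinAt_const
      ((hc y hy).mono fun s (hs : s ∈ Ioo t' y) =>
        Ioo_subset_Icc_self (hsub ⟨hxt.trans (htt'.trans hs.1), hs.2⟩))
      fun s hs => (hf ht' (hsub ⟨hxt.trans (htt'.trans hs.1), hs.2⟩) hs.1).le
  exact hxt_le.trans_lt ((hf ht ht' htt').trans_le ht'y_le)

theorem StrictAntiOn.Icc_of_Ioo (hf : StrictAntiOn f (Ioo a b)) (hc : ContinuousOn f (Icc a b)) :
    StrictAntiOn f (Icc a b) :=
  StrictMonoOn.Icc_of_Ioo (β := βᵒᵈ) hf hc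

theorem StrictMonoOn.Ici_of_Ioi [NoMaxOrder α] (hf : StrictMonoOn f (Ioi a))
    (hc : ContinuousOn f (Ici a)) : StrictMonoOn f (Ici a) := by
  intro x hx y hy hxy
  obtain ⟨b, hyb⟩ := exists_gt y
  exact (hf.mono Ioo_subset_Ioi_self).Icc_of_Ioo (hc.mono Icc_subset_Ici_self)
    ⟨hx, (hxy.trans hyb).le⟩ ⟨hy, hyb.le⟩ hxy

end Extension

section MeanValue

variable {f f' : ℝ → ℝ} {C x y : ℝ}

theorem mul_sub_le_sub_of_le_hasDerivAt (hc : ContinuousOn f (Icc x y))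
    (hd : ∀ t ∈ Ioo x y, HasDerivAt f (f' t) t) (hxy : x ≤ y) (h : ∀ t ∈ Ioo x y, C ≤ f' t) :
    C * (y - x) ≤ f y - f x := by
  refine (convex_Icc x y).mul_sub_le_image_sub_of_le_deriv hc ?_ ?_ x (left_mem_Icc.2 hxy) y
    (right_mem_Icc.2 hxy) hxy <;> rw [interior_Icc]
  · exact fun t ht => (hd t ht).differentiableAt.differentiableWithinAt
  · exact fun t ht => (hd t ht).deriv ▸ h t ht

theorem sub_le_mul_sub_of_hasDerivAt_le (hc : ContinuousOn f (Icc x y))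
    (hd : ∀ t ∈ Ioo x y, HasDerivAt f (f' t) t) (hxy : x ≤ y) (h : ∀ t ∈ Ioo x y, f' t ≤ C) :
    f y - f x ≤ C * (y - x) := by
  refine (convex_Icc x y).image_sub_le_mul_sub_of_deriv_le hc ?_ ?_ x (left_mem_Icc.2 hxy) y
    (right_mem_Icc.2 hxy) hxy <;> rw [interior_Icc]
  · exact fun t ht => (hd t ht).differentiableAt.differentiableWithinAt
  · exact fun t ht => (hd t ht).deriv ▸ h t ht

theorem mul_sub_lt_sub_of_lt_hasDerivAt (hc : ContinuousOn f (Icc x y))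
    (hd : ∀ t ∈ Ioo x y, HasDerivAt f (f' t) t) (hxy : x < y) (h : ∀ t ∈ Ioo x y, C < f' t) :
    C * (y - x) < f y - f x := by
  refine (convex_Icc x y).mul_sub_lt_image_sub_of_lt_deriv hc ?_ ?_ x (left_mem_Icc.2 hxy.le) y
    (right_mem_Icc.2 hxy.le) hxy <;> rw [interior_Icc]
  · exact fun t ht => (hd t ht).differentiableAt.differentiableWithinAt
  · exact fun t ht => (hd t ht).deriv ▸ h t ht

theorem HasDerivAt.eq_of_isLocalExtr_sub_mul {d m : ℝ} (hf : HasDerivAt f d x)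
    (h : IsLocalExtr (fun y => f y - m * y) x) : d = m := by
  have := h.hasDerivAt_eq_zero (hf.sub ((hasDerivAt_id x).const_mul m))
  linarith

theorem le_of_forall_sub_le_mul_sub {a b m : ℝ} (hab : a < b) (hc : ContinuousOn f (Icc a b))
    (hd : ∀ t ∈ Ioo a b, HasDerivAt f (f' t) t) (hf' : ContinuousWithinAt f' (Ioi a) a)
    (h : ∀ y ∈ Ioo a b, f y - f a ≤ m * (y - a)) : f' a ≤ m := by
  by_contra! hlt
  obtain ⟨u, hau, hu⟩ := mem_nhdsGT_iff_exists_Ioo_subset.1 (hf' (Ioi_mem_nhds hlt))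
  obtain ⟨y, hay, hy⟩ := exists_between (lt_min hau hab)
  have hyu : y < u := hy.trans_le (min_le_left _ _)
  have hyb : y < b := hy.trans_le (min_le_right _ _)
  have := mul_sub_lt_sub_of_lt_hasDerivAt (hc.mono (Icc_subset_Icc_right hyb.le))
    (fun t ht => hd t ⟨ht.1, ht.2.trans hyb⟩) hay (fun t ht => hu ⟨ht.1, ht.2.trans hyu⟩)
  linarith [h y ⟨hay, hyb⟩]

theorem add_mul_sub_le_of_monotoneOn {a z c : ℝ} (hc : ContinuousOn f (Ici a))
    (hd : ∀ t ∈ Ioi a, HasDerivAt f (f' t) t) (hmono : MonotoneOn f' (Ici a)) (hz : a ≤ z)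
    (hac : a ≤ c) : f z + f' z * (c - z) ≤ f c := by
  rcases le_total c z with hcz | hzc
  · have := sub_le_mul_sub_of_hasDerivAt_le (hc.mono (Icc_subset_Ici_iff hcz |>.2 hac))
      (fun t ht => hd t (hac.trans_lt ht.1)) hcz
      (fun t ht => hmono (hac.trans ht.1.le) hz ht.2.le)
    linarith
  · have := mul_sub_le_sub_of_le_hasDerivAt (hc.mono (Icc_subset_Ici_iff hzc |>.2 hz))
      (fun t ht => hd t (hz.trans_lt ht.1)) hzc
      (fun t ht => hmono hz (hz.trans ht.1.le) ht.1.le)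
    linarith

end MeanValue

noncomputable def costRatio (H : ℝ → ℝ) (β c₁ c₂ : ℝ) : ℝ :=
  (H c₂ - H c₁) / (c₂ - c₁ - β)

def IsCostMinimizer (H : ℝ → ℝ) (β c₁ c₂ : ℝ) : Prop :=
  (0 ≤ c₁ ∧ c₁ + β < c₂) ∧
    ∀ d₁ d₂ : ℝ, 0 ≤ d₁ → d₁ + β < d₂ → costRatio H β c₁ c₂ ≤ costRatio H β d₁ d₂

section CostRatio

variable {H H' : ℝ → ℝ} {β c₁ c₂ m : ℝ}

theorem le_costRatio_iff (h : c₁ + β < c₂) :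
    m ≤ costRatio H β c₁ c₂ ↔ m * (c₂ - c₁ - β) ≤ H c₂ - H c₁ :=
  le_div_iff₀ (by linarith)

theorem lt_costRatio_iff (h : c₁ + β < c₂) :
    m < costRatio H β c₁ c₂ ↔ m * (c₂ - c₁ - β) < H c₂ - H c₁ :=
  lt_div_iff₀ (by linarith)

theorem costRatio_lt_iff (h : c₁ + β < c₂) :
    costRatio H β c₁ c₂ < m ↔ H c₂ - H c₁ < m * (c₂ - c₁ - β) :=
  div_lt_iff₀ (by linarith)

theorem costRatio_mul (h : c₁ + β < c₂) :
    costRatio H β c₁ c₂ * (c₂ - c₁ - β) = H c₂ - H c₁ :=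
  div_mul_cancel₀ _ (by linarith)

theorem costRatio_nonneg (hH : MonotoneOn H (Ici 0)) (h₁ : 0 ≤ c₁) (h : c₁ + β < c₂)
    (hβ : 0 ≤ β) : 0 ≤ costRatio H β c₁ c₂ :=
  div_nonneg (sub_nonneg.2 (hH h₁ (by simp only [mem_Ici]; linarith) (by linarith)))
    (by linarith)

end CostRatio

section Existence

variable {H H' : ℝ → ℝ} {β m : ℝ}

theorem exists_forall_lt_costRatio_of_le_snd (hHc : ContinuousOn H (Ici 0))
    (hHd : ∀ x ∈ Ioi 0, HasDerivAt H (H' x) x) (hH : MonotoneOn H (Ici 0))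
    (hH'top : Tendsto H' atTop atTop) (hβ : 0 < β) (hm : 0 ≤ m) :
    ∃ R, ∀ d₁ d₂, 0 ≤ d₁ → d₁ + β < d₂ → R ≤ d₂ → m < costRatio H β d₁ d₂ := by
  obtain ⟨R₀, hR₀⟩ := eventually_atTop.1 (tendsto_atTop.1 hH'top (2 * m + 1))
  set R₁ := max R₀ 0
  have hR₁ : 0 ≤ R₁ := le_max_right _ _
  have hslope : ∀ x y, R₁ ≤ x → x ≤ y → (2 * m + 1) * (y - x) ≤ H y - H x := fun x y hx hxy =>
    mul_sub_le_sub_of_le_hasDerivAt (hHc.mono (Icc_subset_Ici_iff hxy |>.2 (hR₁.trans hx)))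
      (fun t ht => hHd t (hR₁.trans_lt (hx.trans_lt ht.1))) hxy
      (fun t ht => hR₀ t ((le_max_left _ _).trans (hx.trans ht.1.le)))
  refine ⟨2 * R₁, fun d₁ d₂ hd₁ hd₂ hRd₂ => (lt_costRatio_iff hd₂).2 ?_⟩
  rcases le_total R₁ d₁ with hd₁R | hd₁R
  · have := hslope d₁ d₂ hd₁R (by linarith)
    nlinarith
  · have := hslope R₁ d₂ le_rfl (by linarith)
    have := hH hd₁ hR₁ hd₁R
    nlinarith

theorem exists_forall_lt_costRatio_of_snd_lt (hHc : ContinuousOn H (Ici 0))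
    (hH : StrictMonoOn H (Ici 0)) (hβ : 0 < β) (hm : 0 ≤ m) {R : ℝ} (hR : 0 ≤ R) :
    ∃ ε > 0, ∀ d₁ d₂, 0 ≤ d₁ → d₁ + β < d₂ → d₂ ≤ R → d₂ < d₁ + β + ε →
      m < costRatio H β d₁ d₂ := by
  have hc : ContinuousOn (fun c => H (c + β) - H c) (Icc 0 R) :=
    (hHc.comp (continuous_add_const β).continuousOn fun c hc => by
      simp only [mem_Ici]; linarith [hc.1]).sub (hHc.mono Icc_subset_Ici_self)
  obtain ⟨c₀, hc₀, hmin⟩ := isCompact_Icc.exists_isMinOn (nonempty_Icc.2 hR) hc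
  set δ := H (c₀ + β) - H c₀
  have hδ : 0 < δ := sub_pos.2 (hH hc₀.1 (by simp only [mem_Ici]; linarith [hc₀.1]) (by linarith))
  refine ⟨δ / (m + 1), by positivity, fun d₁ d₂ hd₁ hd₂ hd₂R hd₂ε => (lt_costRatio_iff hd₂).2 ?_⟩
  have hδd₁ : δ ≤ H (d₁ + β) - H d₁ := hmin ⟨hd₁, by linarith⟩
  have hd₂d₁ : H (d₁ + β) ≤ H d₂ :=
    hH.monotoneOn (by simp only [mem_Ici]; linarith) (by simp only [mem_Ici]; linarith) hd₂.le
  have : m * (d₂ - d₁ - β) ≤ m * (δ / (m + 1)) := by gcongr; linarith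
  have : m * (δ / (m + 1)) < δ := by
    rw [mul_div_assoc', div_lt_iff₀ (by linarith)]; linarith
  linarith

theorem exists_isCostMinimizer (hHc : ContinuousOn H (Ici 0))
    (hHd : ∀ x ∈ Ioi 0, HasDerivAt H (H' x) x) (hH : StrictMonoOn H (Ici 0))
    (hH'top : Tendsto H' atTop atTop) (hβ : 0 < β) :
    ∃ p : ℝ × ℝ, IsCostMinimizer H β p.1 p.2 := by
  set m₀ := costRatio H β 0 (β + 1)
  have hm₀ : 0 ≤ m₀ := costRatio_nonneg hH.monotoneOn le_rfl (by linarith) hβ.le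
  obtain ⟨R, hfar⟩ := exists_forall_lt_costRatio_of_le_snd hHc hHd hH.monotoneOn hH'top hβ hm₀
  set R' := max R (β + 1)
  obtain ⟨ε, hε, hnear⟩ :=
    exists_forall_lt_costRatio_of_snd_lt hHc hH hβ hm₀ (by positivity : 0 ≤ R')
  set ε' := min ε 1
  -- outside the compact set `K` the ratio exceeds its value `m₀` at `(0, β + 1) ∈ K`
  set K := {p : ℝ × ℝ | 0 ≤ p.1 ∧ p.1 + β + ε' ≤ p.2 ∧ p.2 ≤ R'}
  have hε' : 0 < ε' := lt_min hε one_pos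
  have hK : IsCompact K :=
    (isCompact_Icc.prod (isCompact_Icc (a := 0) (b := R'))).of_isClosed_subset
      ((isClosed_le continuous_const continuous_fst).inter ((isClosed_le (by fun_prop)
        continuous_snd).inter (isClosed_le continuous_snd continuous_const)))
      fun p ⟨hp₁, hp₁₂, hp₂⟩ => ⟨⟨hp₁, by linarith⟩, ⟨by linarith, hp₂⟩⟩
  have hK₀ : ((0 : ℝ), β + 1) ∈ K :=
    ⟨le_rfl, by linarith [min_le_right ε 1], le_max_right _ _⟩
  have hcont : ContinuousOn (fun p : ℝ × ℝ => costRatio H β p.1 p.2) K := by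
    refine ((hHc.comp continuous_snd.continuousOn fun p hp => ?_).sub
      (hHc.comp continuous_fst.continuousOn fun p hp => hp.1)).div (by fun_prop) fun p hp => ?_
    · simp only [mem_Ici]; linarith [hp.1, hp.2.1]
    · linarith [hp.2.1]
  obtain ⟨p, hpK, hpmin⟩ := hK.exists_isMinOn ⟨_, hK₀⟩ hcont
  refine ⟨p, ⟨hpK.1, by linarith [hpK.2.1]⟩, fun d₁ d₂ hd₁ hd₂ => ?_⟩
  by_cases hdK : (d₁, d₂) ∈ K
  · exact hpmin hdK
  refine (hpmin hK₀).trans (le_of_lt ?_)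
  rcases le_or_gt d₂ R' with hd₂R | hd₂R
  · have hd₂ε : d₂ < d₁ + β + ε' := by
      by_contra! h
      exact hdK ⟨hd₁, h, hd₂R⟩
    exact hnear d₁ d₂ hd₁ hd₂ hd₂R (hd₂ε.trans_le (by gcongr; exact min_le_left _ _))
  · exact hfar d₁ d₂ hd₁ hd₂ ((le_max_left _ _).trans hd₂R.le)

end Existence

namespace IsCostMinimizer

variable {H H' : ℝ → ℝ} {β c₁ c₂ astar : ℝ}

theorem snd_pos (h : IsCostMinimizer H β c₁ c₂) (hβ : 0 ≤ β) : 0 < c₂ := by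
  linarith [h.1.1, h.1.2]

theorem sub_le_left (h : IsCostMinimizer H β c₁ c₂) {d : ℝ} (hd : 0 ≤ d) (hdc : d + β < c₂) :
    H d - H c₁ ≤ costRatio H β c₁ c₂ * (d - c₁) := by
  have := (le_costRatio_iff hdc).1 (h.2 d c₂ hd hdc)
  have := costRatio_mul (H := H) h.1.2
  linarith

theorem le_sub_right (h : IsCostMinimizer H β c₁ c₂) {d : ℝ} (hd : c₁ + β < d) :
    costRatio H β c₁ c₂ * (d - c₂) ≤ H d - H c₂ := by
  have := (le_costRatio_iff hd).1 (h.2 c₁ d h.1.1 hd)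
  have := costRatio_mul (H := H) h.1.2
  linarith

theorem hasDerivAt_snd_eq (h : IsCostMinimizer H β c₁ c₂) (hd : HasDerivAt H (H' c₂) c₂) :
    H' c₂ = costRatio H β c₁ c₂ :=
  hd.eq_of_isLocalExtr_sub_mul <| IsMinFilter.isExtr <| by
    filter_upwards [Ioi_mem_nhds h.1.2] with d hd
    linarith [h.le_sub_right hd]

theorem hasDerivAt_fst_eq (h : IsCostMinimizer H β c₁ c₂) (hc₁ : 0 < c₁)
    (hd : HasDerivAt H (H' c₁) c₁) : H' c₁ = costRatio H β c₁ c₂ :=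
  hd.eq_of_isLocalExtr_sub_mul <| IsMaxFilter.isExtr <| by
    filter_upwards [Ioo_mem_nhds hc₁ (by linarith [h.1.2] : c₁ < c₂ - β)] with d hd
    linarith [h.sub_le_left hd.1.le (by linarith [hd.2])]

theorem deriv_zero_le (h : IsCostMinimizer H β 0 c₂) (hHc : ContinuousOn H (Ici 0))
    (hHd : ∀ x ∈ Ioi 0, HasDerivAt H (H' x) x) (hH'c : ContinuousWithinAt H' (Ioi 0) 0) :
    H' 0 ≤ costRatio H β 0 c₂ :=
  le_of_forall_sub_le_mul_sub (b := c₂ - β) (by linarith [h.1.2]) (hHc.mono Icc_subset_Ici_self)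
    (fun t ht => hHd t ht.1) hH'c fun y hy => h.sub_le_left hy.1.le (by linarith [hy.2])

theorem exists_deriv_le (h : IsCostMinimizer H β c₁ c₂) (hHc : ContinuousOn H (Ici 0))
    (hHd : ∀ x ∈ Ioi 0, HasDerivAt H (H' x) x) (hH : MonotoneOn H (Ici 0)) (hβ : 0 < β) :
    ∃ t ∈ Ioo c₁ c₂, H' t ≤ costRatio H β c₁ c₂ := by
  by_contra! hlt
  have hc₁₂ : c₁ < c₂ := by linarith [h.1.2]
  have := mul_sub_lt_sub_of_lt_hasDerivAt (hHc.mono (Icc_subset_Ici_iff hc₁₂.le |>.2 h.1.1))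
    (fun t ht => hHd t (h.1.1.trans_lt ht.1)) hc₁₂ hlt
  have := costRatio_mul (H := H) h.1.2
  nlinarith [costRatio_nonneg hH h.1.1 h.1.2 hβ.le]

theorem lt_snd (h : IsCostMinimizer H β c₁ c₂) (hHc : ContinuousOn H (Ici 0))
    (hHd : ∀ x ∈ Ioi 0, HasDerivAt H (H' x) x) (hH : MonotoneOn H (Ici 0)) (hβ : 0 < β)
    (hH'anti : StrictAntiOn H' (Icc 0 astar)) : astar < c₂ := by
  obtain ⟨t, ht, htm⟩ := h.exists_deriv_le hHc hHd hH hβ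
  by_contra! hc₂
  have := hH'anti ⟨h.1.1.trans ht.1.le, ht.2.le.trans hc₂⟩ ⟨(h.snd_pos hβ.le).le, hc₂⟩ ht.2
  linarith [h.hasDerivAt_snd_eq (hHd c₂ (h.snd_pos hβ.le))]

theorem fst_lt (h : IsCostMinimizer H β c₁ c₂) (hHc : ContinuousOn H (Ici 0))
    (hHd : ∀ x ∈ Ioi 0, HasDerivAt H (H' x) x) (hH : MonotoneOn H (Ici 0)) (hβ : 0 < β)
    (hH'mono : StrictMonoOn H' (Ici astar)) (hc₁ : 0 < c₁) : c₁ < astar := by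
  obtain ⟨t, ht, htm⟩ := h.exists_deriv_le hHc hHd hH hβ
  by_contra! hc₁a
  have := hH'mono hc₁a (hc₁a.trans ht.1.le) ht.1
  linarith [h.hasDerivAt_fst_eq hc₁ (hHd c₁ hc₁)]

theorem costRatio_lt_deriv_zero (h : IsCostMinimizer H β c₁ c₂) (hHc : ContinuousOn H (Ici 0))
    (hHd : ∀ x ∈ Ioi 0, HasDerivAt H (H' x) x) (hH : MonotoneOn H (Ici 0)) (hβ : 0 < β)
    (hH'anti : StrictAntiOn H' (Icc 0 astar)) (hH'mono : StrictMonoOn H' (Ici astar))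
    (hc₁ : 0 < c₁) : costRatio H β c₁ c₂ < H' 0 := by
  have hc₁a := h.fst_lt hHc hHd hH hβ hH'mono hc₁
  have := hH'anti ⟨le_rfl, hc₁.le.trans hc₁a.le⟩ ⟨hc₁.le, hc₁a.le⟩ hc₁
  linarith [h.hasDerivAt_fst_eq hc₁ (hHd c₁ hc₁)]

theorem unique {p₁ p₂ q₁ q₂ : ℝ} (hp : IsCostMinimizer H β p₁ p₂)
    (hq : IsCostMinimizer H β q₁ q₂) (hHc : ContinuousOn H (Ici 0))
    (hHd : ∀ x ∈ Ioi 0, HasDerivAt H (H' x) x) (hH'c : ContinuousWithinAt H' (Ioi 0) 0)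
    (hH : MonotoneOn H (Ici 0)) (hβ : 0 < β) (hH'anti : StrictAntiOn H' (Icc 0 astar))
    (hH'mono : StrictMonoOn H' (Ici astar)) : p₁ = q₁ ∧ p₂ = q₂ := by
  have hm : costRatio H β p₁ p₂ = costRatio H β q₁ q₂ :=
    le_antisymm (hp.2 _ _ hq.1.1 hq.1.2) (hq.2 _ _ hp.1.1 hp.1.2)
  refine ⟨?_, hH'mono.injOn (hp.lt_snd hHc hHd hH hβ hH'anti).le
    (hq.lt_snd hHc hHd hH hβ hH'anti).le ?_⟩
  · rcases hp.1.1.eq_or_lt with rfl | hp₁ <;> rcases hq.1.1.eq_or_lt with rfl | hq₁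
    · rfl
    · linarith [hp.deriv_zero_le hHc hHd hH'c,
        hq.costRatio_lt_deriv_zero hHc hHd hH hβ hH'anti hH'mono hq₁]
    · linarith [hq.deriv_zero_le hHc hHd hH'c,
        hp.costRatio_lt_deriv_zero hHc hHd hH hβ hH'anti hH'mono hp₁]
    · refine hH'anti.injOn ⟨hp₁.le, (hp.fst_lt hHc hHd hH hβ hH'mono hp₁).le⟩
        ⟨hq₁.le, (hq.fst_lt hHc hHd hH hβ hH'mono hq₁).le⟩ ?_
      rw [hp.hasDerivAt_fst_eq hp₁ (hHd _ hp₁), hq.hasDerivAt_fst_eq hq₁ (hHd _ hq₁), hm]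
  · rw [hp.hasDerivAt_snd_eq (hHd _ (hp.snd_pos hβ.le)),
      hq.hasDerivAt_snd_eq (hHd _ (hq.snd_pos hβ.le)), hm]

theorem sub_div_le_of_fst_eq_zero (h : IsCostMinimizer H β 0 c₂) (hHc : ContinuousOn H (Ici 0))
    (hHd : ∀ x ∈ Ioi 0, HasDerivAt H (H' x) x) (hH'c : ContinuousWithinAt H' (Ioi 0) 0)
    (hH : MonotoneOn H (Ici 0)) (h0 : 0 < H' 0) {z : ℝ} (hz : 0 ≤ z) :
    z - (H z - H 0) / H' 0 ≤ β := by
  by_contra! hlt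
  have hz' : 0 + β < z := by
    linarith [div_nonneg (sub_nonneg.2 (hH self_mem_Ici hz hz)) h0.le]
  have : costRatio H β 0 z < H' 0 := by
    rw [costRatio_lt_iff hz']
    have := mul_lt_mul_of_pos_left hlt h0
    rw [mul_sub, mul_div_cancel₀ _ h0.ne'] at this
    linarith
  linarith [h.deriv_zero_le hHc hHd hH'c, h.2 0 z le_rfl hz']

theorem fst_eq_zero_of_sub_div_le (h : IsCostMinimizer H β c₁ c₂) (hHc : ContinuousOn H (Ici 0))
    (hHd : ∀ x ∈ Ioi 0, HasDerivAt H (H' x) x) (hH : MonotoneOn H (Ici 0)) (hβ : 0 < β)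
    (hH'anti : StrictAntiOn H' (Icc 0 astar)) (hH'mono : StrictMonoOn H' (Ici astar))
    {z₀ : ℝ} (hz₀ : astar < z₀) (hz₀' : H' z₀ = H' 0) (h0 : 0 < H' 0)
    (hle : z₀ - (H z₀ - H 0) / H' 0 ≤ β) : c₁ = 0 := by
  by_contra hc₁
  have hc₁ : 0 < c₁ := h.1.1.lt_of_ne' hc₁
  have hc₁a := h.fst_lt hHc hHd hH hβ hH'mono hc₁
  have ha : 0 ≤ astar := hc₁.le.trans hc₁a.le
  have hleft : H c₁ - H 0 ≤ H' 0 * (c₁ - 0) :=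
    sub_le_mul_sub_of_hasDerivAt_le (hHc.mono Icc_subset_Ici_self) (fun t ht => hHd t ht.1) hc₁.le
      fun t ht => (hH'anti ⟨le_rfl, ha⟩ ⟨ht.1.le, (ht.2.trans hc₁a).le⟩ ht.1).le
  have hright : H z₀ + H' z₀ * (c₂ - z₀) ≤ H c₂ :=
    add_mul_sub_le_of_monotoneOn (hHc.mono (Ici_subset_Ici.2 ha))
      (fun t ht => hHd t (ha.trans_lt ht)) hH'mono.monotoneOn hz₀.le
      (h.lt_snd hHc hHd hH hβ hH'anti).le
  have hβ' := mul_le_mul_of_nonneg_left hle h0.le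
  rw [mul_sub, mul_div_cancel₀ _ h0.ne'] at hβ'
  rw [hz₀'] at hright
  have : H' 0 ≤ costRatio H β c₁ c₂ := (le_costRatio_iff h.1.2).2 (by linarith)
  linarith [h.costRatio_lt_deriv_zero hHc hHd hH hβ hH'anti hH'mono hc₁]

end IsCostMinimizer

theorem stmt_15_general
    (H H' : ℝ → ℝ)
    (hHcont : ContinuousOn H (Set.Ici 0))
    (hHderiv : ∀ x ∈ Set.Ioi (0:ℝ), HasDerivAt H (H' x) x)
    (hH'pos : ∀ x ∈ Set.Ioi (0:ℝ), 0 < H' x)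
    (hH'cont : ContinuousOn H' (Set.Ici 0))
    (hH'top : Filter.Tendsto H' Filter.atTop Filter.atTop)
    (β : ℝ) (hβ : 0 < β)
    (astar : ℝ) (hastar : 0 ≤ astar)
    (hH'dec : StrictAntiOn H' (Set.Ioo 0 astar))
    (hH'inc : StrictMonoOn H' (Set.Ioi astar))
    (z₀ βmax : ℝ) (hz₀ : 0 < astar → z₀ ∈ Set.Ioi astar ∧ H' z₀ = H' 0)
    (hβmax : βmax = z₀ - (H z₀ - H 0) / H' 0)
    :
    (∃! p : ℝ × ℝ, (0 ≤ p.1 ∧ p.1 + β < p.2) ∧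
      ∀ d₁ d₂ : ℝ, 0 ≤ d₁ → d₁ + β < d₂ →
        (H p.2 - H p.1) / (p.2 - p.1 - β) ≤ (H d₂ - H d₁) / (d₂ - d₁ - β)) ∧
      ∀ c₁ c₂ : ℝ, 0 ≤ c₁ → c₁ + β < c₂ →
        (∀ d₁ d₂ : ℝ, 0 ≤ d₁ → d₁ + β < d₂ →
          (H c₂ - H c₁) / (c₂ - c₁ - β) ≤ (H d₂ - H d₁) / (d₂ - d₁ - β)) →
        (astar = 0 → c₁ = 0) ∧ (0 < astar → (c₁ = 0 ↔ βmax ≤ β)) := by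
  have hH : StrictMonoOn H (Ici 0) := strictMonoOn_of_deriv_pos (convex_Ici 0) hHcont
    fun x hx => by
      rw [interior_Ici] at hx
      exact (hHderiv x hx).deriv ▸ hH'pos x hx
  have hH'c : ContinuousWithinAt H' (Ioi 0) 0 :=
    (hH'cont 0 self_mem_Ici).mono Ioi_subset_Ici_self
  have hH'anti := hH'dec.Icc_of_Ioo (hH'cont.mono Icc_subset_Ici_self)
  have hH'mono := hH'inc.Ici_of_Ioi (hH'cont.mono (Ici_subset_Ici.2 hastar))
  obtain ⟨p, hp⟩ := exists_isCostMinimizer hHcont hHderiv hH hH'top hβ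
  refine ⟨⟨p, hp, fun q hq => ?_⟩, fun c₁ c₂ h₁ h₂ hmin => ?_⟩
  · obtain ⟨h₁, h₂⟩ := IsCostMinimizer.unique (hq : IsCostMinimizer H β q.1 q.2) hp hHcont
      hHderiv hH'c hH.monotoneOn hβ hH'anti hH'mono
    exact Prod.ext h₁ h₂
  have hc : IsCostMinimizer H β c₁ c₂ := ⟨⟨h₁, h₂⟩, hmin⟩
  refine ⟨fun ha => ?_, fun ha => ?_⟩
  · by_contra hc₁
    linarith [hc.fst_lt hHcont hHderiv hH.monotoneOn hβ hH'mono (h₁.lt_of_ne' hc₁)]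
  obtain ⟨hz₀a, hz₀'⟩ := hz₀ ha
  have h0 : 0 < H' 0 := (hH'pos astar ha).trans (hH'anti ⟨le_rfl, hastar⟩ ⟨hastar, le_rfl⟩ ha)
  rw [hβmax]
  constructor
  · rintro rfl
    exact hc.sub_div_le_of_fst_eq_zero hHcont hHderiv hH'c hH.monotoneOn h0
      (hastar.trans hz₀a.le)
  · exact hc.fst_eq_zero_of_sub_div_le hHcont hHderiv hH.monotoneOn hβ hH'anti hH'mono hz₀a hz₀'
      h0

theorem stmt_15
    (H H' : ℝ → ℝ)
    (hHcont : ContinuousOn H (Set.Ici 0))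
    (hHderiv : ∀ x ∈ Set.Ioi (0:ℝ), HasDerivAt H (H' x) x)
    (hH'pos : ∀ x ∈ Set.Ioi (0:ℝ), 0 < H' x)
    (hH'cont : ContinuousOn H' (Set.Ici 0))
    (hH'top : Filter.Tendsto H' Filter.atTop Filter.atTop)
    (β : ℝ) (hβ : 0 < β)
    (astar : ℝ) (hastar : 0 ≤ astar)
    (hH'dec : StrictAntiOn H' (Set.Ioo 0 astar))
    (hH'inc : StrictMonoOn H' (Set.Ioi astar))
    (hH'conv : ConvexOn ℝ (Set.Ioi 0) H')
    (z₀ βmax : ℝ) (hz₀ : 0 < astar → z₀ ∈ Set.Ioi astar ∧ H' z₀ = H' 0)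
    (hβmax : βmax = z₀ - (H z₀ - H 0) / H' 0)
    :
    (∃! p : ℝ × ℝ, (0 ≤ p.1 ∧ p.1 + β < p.2) ∧
      ∀ d₁ d₂ : ℝ, 0 ≤ d₁ → d₁ + β < d₂ →
        (H p.2 - H p.1) / (p.2 - p.1 - β) ≤ (H d₂ - H d₁) / (d₂ - d₁ - β)) ∧
      ∀ c₁ c₂ : ℝ, 0 ≤ c₁ → c₁ + β < c₂ →
        (∀ d₁ d₂ : ℝ, 0 ≤ d₁ → d₁ + β < d₂ →
          (H c₂ - H c₁) / (c₂ - c₁ - β) ≤ (H d₂ - H d₁) / (d₂ - d₁ - β)) →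
        (astar = 0 → c₁ = 0) ∧ (0 < astar → (c₁ = 0 ↔ βmax ≤ β)) :=
  stmt_15_general H H' hHcont hHderiv hH'pos hH'cont hH'top β hβ astar hastar hH'dec hH'inc z₀ βmax
    hz₀ hβmax
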